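/- For odd n ≥ 3, let -e₁ < -e₂ < 0 be the two real extraneous fixed points of C_n (i.e., e₁ⁿ and e₂ⁿ correspond to the two negative roots of 3n²w² + n(n+5)w + 2 = 0), and let ξ be the real pole of C_n (the nth real root of -1/n). Then -e₁ < ξ < -e₂, and: C_n(x) < x for x < -e₁; C_n(x) > x for -e₁ < x < ξ; C_n(x) < x for ξ < x < -e₂; C_n(x) > x for -e₂ < x < 0; and C_n(x) < x for x > 0. -/

import Mathlib

/-! On the real line `C_n(x) - x = -x·q(xⁿ) / (2(nxⁿ + 1)³)` with
`q(w) = 3n²w² + n(n+5)w + 2 = 3n²(w - (-e₁)ⁿ)(w - (-e₂)ⁿ)` and `nxⁿ + 1 = n(xⁿ - ξⁿ)`.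
Since `q(-1/n) = -n < 0`, the pole value `ξⁿ` lies between the two roots of `q`. For odd `n`,
`xⁿ - yⁿ` has the sign of `x - y`, so `C_n(x) - x` has the sign of `-x(x + e₁)(x + e₂)(x - ξ)`,
and the sign pattern is read off this product of linear factors. -/

/-- The Chebyshev's method applied to `z·e^{z^n}`, restricted to the real line. -/
noncomputable def CnR (n : ℕ) (x : ℝ) : ℝ :=
  (n:ℝ) * x^(n+1) * (2*(n:ℝ)^2*x^(2*n) + 3*(n:ℝ)*x^n - (n:ℝ) + 1) /
    (2 * ((n:ℝ)*x^n + 1)^3)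

theorem quadratic_eq_mul_sub_mul_sub {R : Type*} [CommRing R] [IsDomain R] {c d e a b : R}
    (hab : a ≠ b) (ha : c * a ^ 2 + d * a + e = 0) (hb : c * b ^ 2 + d * b + e = 0) (w : R) :
    c * w ^ 2 + d * w + e = c * (w - a) * (w - b) := by
  have hsum : c * (a + b) + d = 0 := by
    refine (mul_eq_zero.mp ?_).resolve_left (sub_ne_zero.mpr hab)
    linear_combination ha - hb
  linear_combination (w - a) * hsum + ha

theorem cnR_sub_self {n : ℕ} {x : ℝ} (hx : (n:ℝ) * x^n + 1 ≠ 0) :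
    CnR n x - x =
      -(x * (3 * (n:ℝ)^2 * (x^n)^2 + n * (n + 5) * x^n + 2)) / (2 * (n * x^n + 1)^3) := by
  rw [CnR, pow_mul', pow_succ]
  field_simp
  ring

theorem Odd.sign_pow_sub_pow {n : ℕ} (hn : Odd n) (x y : ℝ) :
    SignType.sign (x ^ n - y ^ n) = SignType.sign (x - y) := by
  rcases lt_trichotomy x y with h | rfl | h
  · rw [sign_neg (sub_neg.mpr h), sign_neg (sub_neg.mpr (hn.strictMono_pow h))]
  · simp
  · rw [sign_pos (sub_pos.mpr h), sign_pos (sub_pos.mpr (hn.strictMono_pow h))]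

theorem sign_cnR_sub_self {n : ℕ} (hn : Odd n) {e₁ e₂ ξ x : ℝ}
    (hq : ∀ w : ℝ, 3 * (n:ℝ)^2 * w^2 + n * (n + 5) * w + 2
      = 3 * n^2 * (w - (-e₁)^n) * (w - (-e₂)^n))
    (hξ : (n:ℝ) * ξ^n + 1 = 0) (hx : x ≠ ξ) :
    SignType.sign (CnR n x - x) = -SignType.sign (x * (x + e₁) * (x + e₂) * (x - ξ)) := by
  have hn0 : (0:ℝ) < n := by exact_mod_cast hn.pos
  have hD : (n:ℝ) * x^n + 1 = n * (x^n - ξ^n) := by linear_combination hξ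
  have hD0 : (n:ℝ) * x^n + 1 ≠ 0 := by
    rw [hD]; exact mul_ne_zero hn0.ne' (sub_ne_zero.mpr (hn.strictMono_pow.injective.ne hx))
  have key : (CnR n x - x) * (2 * (n * x^n + 1) ^ 4)
      = -(3 * n^3 * (x * (x^n - (-e₁)^n) * (x^n - (-e₂)^n) * (x^n - ξ^n))) := by
    rw [cnR_sub_self hD0, div_mul_eq_mul_div, div_eq_iff (by positivity), hq, hD]
    ring
  have := congrArg SignType.sign key
  rw [sign_mul, sign_pos (by positivity : (0:ℝ) < 2 * (n * x^n + 1) ^ 4), mul_one, Left.sign_neg,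
    sign_mul, sign_pos (by positivity : (0:ℝ) < 3 * n^3), one_mul] at this
  simp only [this, sign_mul, hn.sign_pow_sub_pow, sub_neg_eq_add]

theorem cnR_lt_self_iff {n : ℕ} (hn : Odd n) {e₁ e₂ ξ x : ℝ}
    (hq : ∀ w : ℝ, 3 * (n:ℝ)^2 * w^2 + n * (n + 5) * w + 2
      = 3 * n^2 * (w - (-e₁)^n) * (w - (-e₂)^n))
    (hξ : (n:ℝ) * ξ^n + 1 = 0) (hx : x ≠ ξ) :
    CnR n x < x ↔ 0 < x * (x + e₁) * (x + e₂) * (x - ξ) := by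
  rw [← sub_neg, ← sign_eq_neg_one_iff, sign_cnR_sub_self hn hq hξ hx, neg_inj, sign_eq_one_iff]

theorem self_lt_cnR_iff {n : ℕ} (hn : Odd n) {e₁ e₂ ξ x : ℝ}
    (hq : ∀ w : ℝ, 3 * (n:ℝ)^2 * w^2 + n * (n + 5) * w + 2
      = 3 * n^2 * (w - (-e₁)^n) * (w - (-e₂)^n))
    (hξ : (n:ℝ) * ξ^n + 1 = 0) (hx : x ≠ ξ) :
    x < CnR n x ↔ x * (x + e₁) * (x + e₂) * (x - ξ) < 0 := by
  rw [← sub_pos, ← sign_eq_one_iff, sign_cnR_sub_self hn hq hξ hx, neg_eq_iff_eq_neg,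
    sign_eq_neg_one_iff]

theorem pole_mem_Ioo {N a b c : ℝ} (hN : 0 < N) (hab : a < b)
    (hq : ∀ w : ℝ, 3 * N^2 * w^2 + N * (N + 5) * w + 2 = 3 * N^2 * (w - a) * (w - b))
    (hc : N * c + 1 = 0) : c ∈ Set.Ioo a b := by
  have hval : 3 * N^2 * ((c - a) * (c - b)) = -N := by
    linear_combination -(hq c) + (3 * N * c + N + 2) * hc
  have hneg : (c - a) * (c - b) < 0 := by nlinarith
  constructor <;> nlinarith

theorem Cn_real_sign_pattern_general (n : ℕ) (hodd : Odd n)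
    (e₁ e₂ ξ : ℝ) (he₂ : 0 < e₂) (he : e₂ < e₁)
    (hfix1 : 3*(n:ℝ)^2*(-e₁)^(2*n) + (n:ℝ)*((n:ℝ)+5)*(-e₁)^n + 2 = 0)
    (hfix2 : 3*(n:ℝ)^2*(-e₂)^(2*n) + (n:ℝ)*((n:ℝ)+5)*(-e₂)^n + 2 = 0)
    (hξ : ξ^n = -1/(n:ℝ)) :
    (-e₁ < ξ ∧ ξ < -e₂) ∧
    (∀ x : ℝ, x < -e₁ → CnR n x < x) ∧
    (∀ x : ℝ, -e₁ < x → x < ξ → x < CnR n x) ∧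
    (∀ x : ℝ, ξ < x → x < -e₂ → CnR n x < x) ∧
    (∀ x : ℝ, -e₂ < x → x < 0 → x < CnR n x) ∧
    (∀ x : ℝ, 0 < x → CnR n x < x) := by
  have hn : (0:ℝ) < n := by exact_mod_cast hodd.pos
  have hpow : StrictMono (fun x : ℝ => x ^ n) := hodd.strictMono_pow
  have hab : (-e₁)^n < (-e₂)^n := hpow (neg_lt_neg he)
  have hq := quadratic_eq_mul_sub_mul_sub hab.ne (by rwa [pow_mul'] at hfix1)
    (by rwa [pow_mul'] at hfix2)
  have hpole : (n:ℝ) * ξ^n + 1 = 0 := by rw [hξ]; field_simp; ring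
  obtain ⟨h₁, h₂⟩ := pole_mem_Ioo hn hab hq hpole
  have hξ₁ : -e₁ < ξ := hpow.lt_iff_lt.mp h₁
  have hξ₂ : ξ < -e₂ := hpow.lt_iff_lt.mp h₂
  refine ⟨⟨hξ₁, hξ₂⟩, fun x hx => ?_, fun x hx₁ hx₂ => ?_, fun x hx₁ hx₂ => ?_,
    fun x hx₁ hx₂ => ?_, fun x hx => ?_⟩
  · rw [cnR_lt_self_iff hodd hq hpole (by linarith)]
    exact mul_pos_of_neg_of_neg (mul_neg_of_pos_of_neg
      (mul_pos_of_neg_of_neg (by linarith) (by linarith)) (by linarith)) (by linarith)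
  · rw [self_lt_cnR_iff hodd hq hpole hx₂.ne]
    exact mul_neg_of_pos_of_neg (mul_pos_of_neg_of_neg
      (mul_neg_of_neg_of_pos (by linarith) (by linarith)) (by linarith)) (by linarith)
  · rw [cnR_lt_self_iff hodd hq hpole hx₁.ne']
    exact mul_pos (mul_pos_of_neg_of_neg
      (mul_neg_of_neg_of_pos (by linarith) (by linarith)) (by linarith)) (by linarith)
  · rw [self_lt_cnR_iff hodd hq hpole (by linarith)]
    exact mul_neg_of_neg_of_pos (mul_neg_of_neg_of_pos
      (mul_neg_of_neg_of_pos hx₂ (by linarith)) (by linarith)) (by linarith)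
  · rw [cnR_lt_self_iff hodd hq hpole (by linarith)]
    exact mul_pos (mul_pos (mul_pos hx (by linarith)) (by linarith)) (by linarith)

/-- For odd `n ≥ 3`, with `-e₁ < -e₂ < 0` the two real extraneous fixed points of
`C_n` and `ξ` the real pole of `C_n`, one has `-e₁ < ξ < -e₂`, and the comparison
of `C_n(x)` with `x` on the real line follows the stated sign pattern. -/
theorem Cn_real_sign_pattern (n : ℕ) (hn : 3 ≤ n) (hodd : Odd n)
    (e₁ e₂ ξ : ℝ) (he₂ : 0 < e₂) (he : e₂ < e₁)
    (hfix1 : 3*(n:ℝ)^2*(-e₁)^(2*n) + (n:ℝ)*((n:ℝ)+5)*(-e₁)^n + 2 = 0)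
    (hfix2 : 3*(n:ℝ)^2*(-e₂)^(2*n) + (n:ℝ)*((n:ℝ)+5)*(-e₂)^n + 2 = 0)
    (hξ : ξ^n = -1/(n:ℝ)) :
    (-e₁ < ξ ∧ ξ < -e₂) ∧
    (∀ x : ℝ, x < -e₁ → CnR n x < x) ∧
    (∀ x : ℝ, -e₁ < x → x < ξ → x < CnR n x) ∧
    (∀ x : ℝ, ξ < x → x < -e₂ → CnR n x < x) ∧
    (∀ x : ℝ, -e₂ < x → x < 0 → x < CnR n x) ∧
    (∀ x : ℝ, 0 < x → CnR n x < x) :=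
  Cn_real_sign_pattern_general n hodd e₁ e₂ ξ he₂ he hfix1 hfix2 hξ
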